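/- Let N ≥ 3 and let A = (A_k^j) be an (N+1) × N real matrix with entries in {−1, 0, 1} such that the square matrix E obtained by deleting the first row of A is invertible, A_k^k = 1, A_k^j ∈ {−1, 0} for j < k, A_k^j = 0 for j > k (indexing rows j = 1,…,N of E), and each column of E contains at most two nonzero entries. Let b ∈ ℝ^N with |b_j| ≤ β for all j, and let λ ∈ ℝ^N be the unique solution of E λ = b. Then |λ_k| ≤ N · 2^{N−3} · β for each k. -/

import Mathlib

/-!
Read `E i k ≠ 0` with `i < k` as "`i` is the parent of `k`". Since `E` is unit upper triangular
and each column has at most one off-diagonal nonzero entry, every `k` has at most one parent, so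
these edges form a forest, and row `j` of `E λ = b` expresses `λ_j` through `b_j` and the `λ_k`
of the children `k` of `j`. The roots of the forest restricted to `{j, …, N-1}` are `j` together
with those roots of the forest on `{j+1, …, N-1}` that are not children of `j`; hence the sum of
`|λ_k|` over these roots grows by at most `β` from level `j + 1` to level `j`. Descending from
`j = N` gives `|λ_k| ≤ (N - k) β`, which is stronger than the claimed bound.
-/

open Finset Matrix

theorem Finset.eq_of_mem_of_card_le_two {α : Type*} {s : Finset α} (hs : s.card ≤ 2)
    {a b c : α} (ha : a ∈ s) (hb : b ∈ s) (hc : c ∈ s) (hac : a ≠ c) (hbc : b ≠ c) : a = b := by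
  by_contra hab
  have := Finset.two_lt_card.2 ⟨a, ha, b, hb, c, hc, hab, hac, hbc⟩
  omega

section Forest

variable {N : ℕ}

noncomputable def forestRootsFrom (E : Matrix (Fin N) (Fin N) ℝ) (j : ℕ) : Finset (Fin N) :=
  {k | j ≤ (k : ℕ) ∧ ∀ i : Fin N, j ≤ (i : ℕ) → i < k → E i k = 0}

theorem self_mem_forestRootsFrom (E : Matrix (Fin N) (Fin N) ℝ) (k : Fin N) :
    k ∈ forestRootsFrom E k := by
  simp only [forestRootsFrom, mem_filter, mem_univ, true_and]
  exact ⟨le_rfl, fun i hki hik => absurd hik (not_lt.2 (Fin.le_iff_val_le_val.2 hki))⟩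

theorem forestRootsFrom_eq_empty (E : Matrix (Fin N) (Fin N) ℝ) {j : ℕ} (hj : N ≤ j) :
    forestRootsFrom E j = ∅ := by
  simp only [forestRootsFrom, filter_eq_empty_iff, mem_univ, true_implies, not_and]
  intro k hjk
  omega

theorem forestRootsFrom_eq_insert (E : Matrix (Fin N) (Fin N) ℝ) {j : ℕ} (hj : j < N) :
    forestRootsFrom E j =
      insert ⟨j, hj⟩ ((forestRootsFrom E (j + 1)).filter fun k => E ⟨j, hj⟩ k = 0) := by
  ext k
  simp only [forestRootsFrom, mem_filter, mem_univ, true_and, mem_insert, Fin.ext_iff,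
    Fin.lt_def]
  constructor
  · rintro ⟨hjk, hroot⟩
    rcases eq_or_lt_of_le hjk with hjk | hjk
    · exact Or.inl hjk.symm
    · exact Or.inr ⟨⟨hjk, fun i hi hik => hroot i (by omega) hik⟩, hroot ⟨j, hj⟩ le_rfl hjk⟩
  · rintro (hkj | ⟨⟨hjk, hroot⟩, hE⟩)
    · exact ⟨hkj.ge, fun i hi hik => by omega⟩
    · refine ⟨by omega, fun i hi hik => ?_⟩
      rcases eq_or_lt_of_le hi with hij | hji
      · rwa [show i = ⟨j, hj⟩ from Fin.ext hij.symm]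
      · exact hroot i hji hik

theorem mem_forestRootsFrom_succ_of_ne_zero {E : Matrix (Fin N) (Fin N) ℝ}
    (hdiag : ∀ k, E k k = 1)
    (hcol : ∀ k : Fin N, (univ.filter fun j => E j k ≠ 0).card ≤ 2)
    {j k : Fin N} (hjk : j < k) (hE : E j k ≠ 0) :
    k ∈ forestRootsFrom E (j + 1) := by
  simp only [forestRootsFrom, mem_filter, mem_univ, true_and]
  refine ⟨hjk, fun i hi hik => ?_⟩
  by_contra hEi
  have hij : i = j := Finset.eq_of_mem_of_card_le_two (hcol k)
    (by simpa using hEi) (by simpa using hE) (by simp [hdiag]) hik.ne hjk.ne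
  subst hij
  omega

variable {E : Matrix (Fin N) (Fin N) ℝ} {b lam : Fin N → ℝ} {β : ℝ}

theorem abs_le_add_sum_children (hdiag : ∀ k, E k k = 1)
    (hlower : ∀ j k : Fin N, k < j → E j k = 0) (habs : ∀ j k, |E j k| ≤ 1)
    (hcol : ∀ k : Fin N, (univ.filter fun j => E j k ≠ 0).card ≤ 2)
    (hsol : E *ᵥ lam = b) (hb : ∀ j, |b j| ≤ β) (j : Fin N) :
    |lam j| ≤ β + ∑ k ∈ (forestRootsFrom E (j + 1)).filter (fun k => E j k ≠ 0), |lam k| := by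
  set C := (forestRootsFrom E (j + 1)).filter (fun k => E j k ≠ 0)
  have hjC : j ∉ C := by simp [C, forestRootsFrom]
  have hrow : b j = lam j + ∑ k ∈ C, E j k * lam k := by
    rw [← hsol, mulVec, dotProduct, ← sum_subset (subset_univ (insert j C)), sum_insert hjC,
      hdiag, one_mul]
    intro k _ hk
    by_contra hE
    have hjk : j < k := lt_of_le_of_ne (not_lt.1 fun hkj => hE (by rw [hlower j k hkj, zero_mul]))
      (by rintro rfl; simp at hk)
    have hEjk : E j k ≠ 0 := fun h => hE (by rw [h, zero_mul])
    exact hk (mem_insert_of_mem (mem_filter.2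
      ⟨mem_forestRootsFrom_succ_of_ne_zero hdiag hcol hjk hEjk, hEjk⟩))
  calc |lam j| = |b j - ∑ k ∈ C, E j k * lam k| := by rw [hrow, add_sub_cancel_right]
    _ ≤ |b j| + |∑ k ∈ C, E j k * lam k| := abs_sub _ _
    _ ≤ β + ∑ k ∈ C, |lam k| := by
      refine add_le_add (hb j) ((abs_sum_le_sum_abs _ _).trans (sum_le_sum fun k _ => ?_))
      rw [abs_mul]
      exact mul_le_of_le_one_left (abs_nonneg _) (habs j k)

theorem sum_abs_forestRootsFrom_le (hdiag : ∀ k, E k k = 1)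
    (hlower : ∀ j k : Fin N, k < j → E j k = 0) (habs : ∀ j k, |E j k| ≤ 1)
    (hcol : ∀ k : Fin N, (univ.filter fun j => E j k ≠ 0).card ≤ 2)
    (hsol : E *ᵥ lam = b) (hb : ∀ j, |b j| ≤ β) (j : ℕ) :
    ∑ k ∈ forestRootsFrom E j, |lam k| ≤ (N - j : ℕ) * β := by
  by_cases hj : j < N
  · have ih := sum_abs_forestRootsFrom_le hdiag hlower habs hcol hsol hb (j + 1)
    have hrow := abs_le_add_sum_children hdiag hlower habs hcol hsol hb ⟨j, hj⟩
    rw [← sum_filter_add_sum_filter_not _ fun k => E ⟨j, hj⟩ k = 0] at ih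
    rw [forestRootsFrom_eq_insert E hj, sum_insert (by simp [forestRootsFrom]),
      show N - j = N - (j + 1) + 1 by omega]
    push_cast
    linarith
  · simp [forestRootsFrom_eq_empty E (not_lt.1 hj), Nat.sub_eq_zero_of_le (not_lt.1 hj)]
termination_by N - j

theorem abs_le_sub_mul_of_mulVec_eq (hdiag : ∀ k, E k k = 1)
    (hlower : ∀ j k : Fin N, k < j → E j k = 0) (habs : ∀ j k, |E j k| ≤ 1)
    (hcol : ∀ k : Fin N, (univ.filter fun j => E j k ≠ 0).card ≤ 2)
    (hsol : E *ᵥ lam = b) (hb : ∀ j, |b j| ≤ β) (k : Fin N) :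
    |lam k| ≤ (N - k : ℕ) * β :=
  (single_le_sum (fun i _ => abs_nonneg (lam i)) (self_mem_forestRootsFrom E k)).trans
    (sum_abs_forestRootsFrom_le hdiag hlower habs hcol hsol hb k)

end Forest

theorem stmt19_general (N : ℕ)
    (E : Matrix (Fin N) (Fin N) ℝ)
    (hentries : ∀ j k, E j k = 1 ∨ E j k = 0 ∨ E j k = -1)
    (hdiag : ∀ k, E k k = 1)
    (hlower : ∀ j k : Fin N, k < j → E j k = 0)
    (hcol : ∀ k : Fin N, (Finset.univ.filter fun j => E j k ≠ 0).card ≤ 2)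
    (b lam : Fin N → ℝ) (β : ℝ)
    (hb : ∀ j, |b j| ≤ β)
    (hsol : E.mulVec lam = b) :
    ∀ k, |lam k| ≤ (N : ℝ) * 2 ^ (N - 3) * β := by
  intro k
  have habs : ∀ j k, |E j k| ≤ 1 := fun j k => by
    rcases hentries j k with h | h | h <;> simp [h]
  have hβ : 0 ≤ β := (abs_nonneg _).trans (hb k)
  calc |lam k| ≤ (N - k : ℕ) * β := abs_le_sub_mul_of_mulVec_eq hdiag hlower habs hcol hsol hb k
    _ ≤ N * β := by gcongr; omega
    _ ≤ N * 2 ^ (N - 3) * β := by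
      rw [mul_right_comm]
      exact le_mul_of_one_le_right (by positivity) (one_le_pow₀ one_le_two)

/-- Let `N ≥ 3` and let `E` be an invertible `N × N` real matrix with entries
in `{−1,0,1}`, unit diagonal, zeros below the diagonal, entries above the diagonal in
`{−1,0}`, and at most two nonzero entries in each column. If `E λ = b` with `|b_j| ≤ β`
for all `j`, then `|λ_k| ≤ N · 2^{N−3} · β` for all `k`. -/
theorem stmt19 (N : ℕ) (hN : 3 ≤ N)
    (E : Matrix (Fin N) (Fin N) ℝ)
    (hentries : ∀ j k, E j k = 1 ∨ E j k = 0 ∨ E j k = -1)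
    (hdiag : ∀ k, E k k = 1)
    (hlower : ∀ j k : Fin N, k < j → E j k = 0)
    (hupper : ∀ j k : Fin N, j < k → E j k = 0 ∨ E j k = -1)
    (hcol : ∀ k : Fin N, (Finset.univ.filter fun j => E j k ≠ 0).card ≤ 2)
    (hinv : IsUnit E.det)
    (b lam : Fin N → ℝ) (β : ℝ)
    (hb : ∀ j, |b j| ≤ β)
    (hsol : E.mulVec lam = b) :
    ∀ k, |lam k| ≤ (N : ℝ) * 2 ^ (N - 3) * β :=
  stmt19_general N E hentries hdiag hlower hcol b lam β hb hsol
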